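/- Let μ be a probability measure on ℝⁿ × Bool that is linearly separable with margin d ≥ 0 via (w, b). Then the expected cross-entropy of the paper's linear probe satisfies E_{(x,y)∼μ}[−log P̂(y|x)] < log(1 + e^{−d}) ≤ e^{−d}, where P̂ is the softmax predicted probability of the probe. -/

import Mathlib

open MeasureTheory
open scoped BigOperators

/-- Logits of the paper's linear probe for binary classification:
class 0 (`false`) gets `w·x + b`, class 1 (`true`) gets `-(w·x + b) - d`. -/
noncomputable def probeLogit {n : ℕ} (w : Fin n → ℝ) (b d : ℝ) (x : Fin n → ℝ) : Bool → ℝ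
  | false => (∑ i, w i * x i) + b
  | true => -((∑ i, w i * x i) + b) - d

/-- Softmax predicted probability `P̂(y|x)` of the paper's linear probe. -/
noncomputable def probePred {n : ℕ} (w : Fin n → ℝ) (b d : ℝ) (x : Fin n → ℝ) (y : Bool) : ℝ :=
  Real.exp (probeLogit w b d x y) /
    (Real.exp (probeLogit w b d x false) + Real.exp (probeLogit w b d x true))

/-!
The cross-entropy of a two-class softmax is the softplus `t ↦ log (1 + exp t)` of the logit gap
`t = ℓ_{¬y} - ℓ_y`. Separability with margin `d` makes this gap `< -d` almost surely: for
`y = false` it is `-2 s - d` with `s = w·x + b > 0`, for `y = true` it is `2 s + d` with `s < -d`.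
Since softplus is strictly increasing, the loss is almost surely `< log (1 + exp (-d))`, and so is
its expectation under a probability measure. Finally `log (1 + u) ≤ u`.
-/

theorem MeasureTheory.integral_lt_integral_of_ae_lt {α : Type*} [MeasurableSpace α]
    {μ : Measure α} [NeZero μ] {f g : α → ℝ} (hf : Integrable f μ) (hg : Integrable g μ)
    (hlt : ∀ᵐ x ∂μ, f x < g x) : ∫ x, f x ∂μ < ∫ x, g x ∂μ := by
  rw [← sub_pos, ← integral_sub hg hf,
    integral_pos_iff_support_of_nonneg_ae (hlt.mono fun x hx => sub_nonneg.2 hx.le) (hg.sub hf)]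
  refine pos_iff_ne_zero.2 fun hnull => ?_
  obtain ⟨x, hx, hx'⟩ := (hlt.and (measure_eq_zero_iff_ae_notMem.1 hnull)).exists
  exact hx' (sub_ne_zero.2 hx.ne')

namespace Real

theorem neg_log_exp_div_exp_add_exp (a c : ℝ) :
    -log (exp a / (exp a + exp c)) = log (1 + exp (c - a)) := by
  rw [← log_inv, inv_div, add_div, div_self (exp_ne_zero a), ← exp_sub]

theorem strictMono_log_one_add_exp : StrictMono fun t : ℝ => log (1 + exp t) :=
  fun _ _ hst => log_lt_log (by positivity) (by gcongr)

theorem log_one_add_exp_nonneg (t : ℝ) : 0 ≤ log (1 + exp t) :=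
  log_nonneg (le_add_of_nonneg_right (exp_pos t).le)

end Real

open Real

section Probe

variable {n : ℕ} (w : Fin n → ℝ) (b d : ℝ)

theorem neg_log_probePred (x : Fin n → ℝ) (y : Bool) :
    -log (probePred w b d x y) = log (1 + exp (probeLogit w b d x (!y) - probeLogit w b d x y)) := by
  cases y
  · exact neg_log_exp_div_exp_add_exp _ _
  · rw [probePred, add_comm]
    exact neg_log_exp_div_exp_add_exp _ _

theorem probeLogit_not_sub_lt {x : Fin n → ℝ} {y : Bool}
    (h₀ : y = false → 0 < (∑ i, w i * x i) + b) (h₁ : y = true → (∑ i, w i * x i) + b < -d) :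
    probeLogit w b d x (!y) - probeLogit w b d x y < -d := by
  cases y
  · simp only [probeLogit, Bool.not_false]
    linarith [h₀ rfl]
  · simp only [probeLogit, Bool.not_true]
    linarith [h₁ rfl]

theorem measurable_probePred : Measurable fun p : (Fin n → ℝ) × Bool => probePred w b d p.1 p.2 :=
  measurable_from_prod_countable_left fun y => by
    cases y <;> simp only [probePred, probeLogit] <;> fun_prop

end Probe

theorem stmt_2_general {n : ℕ} (μ : Measure ((Fin n → ℝ) × Bool)) [IsProbabilityMeasure μ]
    (w : Fin n → ℝ) (b d : ℝ)
    -- linear separability with margin `d` via `(w, b)`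
    (hsep : ∀ᵐ p ∂μ, (p.2 = false → 0 < (∑ i, w i * p.1 i) + b) ∧
      (p.2 = true → (∑ i, w i * p.1 i) + b < -d)) :
    (∫ p, -Real.log (probePred w b d p.1 p.2) ∂μ) < Real.log (1 + Real.exp (-d)) ∧
      Real.log (1 + Real.exp (-d)) ≤ Real.exp (-d) := by
  have hlt : ∀ᵐ p ∂μ, -log (probePred w b d p.1 p.2) < log (1 + exp (-d)) :=
    hsep.mono fun p hp => by
      rw [neg_log_probePred]
      exact strictMono_log_one_add_exp (probeLogit_not_sub_lt w b d hp.1 hp.2)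
  have hint : Integrable (fun p => -log (probePred w b d p.1 p.2)) μ := by
    refine (integrable_const (log (1 + exp (-d)))).mono'
      (measurable_probePred w b d).log.neg.aestronglyMeasurable (hlt.mono fun p hp => ?_)
    rw [norm_of_nonneg (by rw [neg_log_probePred]; exact log_one_add_exp_nonneg _)]
    exact hp.le
  refine ⟨?_, ?_⟩
  · simpa using integral_lt_integral_of_ae_lt hint (integrable_const _) hlt
  · linarith [log_le_sub_one_of_pos (by positivity : 0 < 1 + exp (-d))]

theorem stmt_2 {n : ℕ} (μ : Measure ((Fin n → ℝ) × Bool)) [IsProbabilityMeasure μ]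
    (w : Fin n → ℝ) (b d : ℝ) (hd : 0 ≤ d)
    -- linear separability with margin `d` via `(w, b)`
    (hsep : ∀ᵐ p ∂μ, (p.2 = false → 0 < (∑ i, w i * p.1 i) + b) ∧
      (p.2 = true → (∑ i, w i * p.1 i) + b < -d)) :
    (∫ p, -Real.log (probePred w b d p.1 p.2) ∂μ) < Real.log (1 + Real.exp (-d)) ∧
      Real.log (1 + Real.exp (-d)) ≤ Real.exp (-d) :=
  stmt_2_general μ w b d hsep
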